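/- In Picaria, the state with configuration c given by c(1,1) = X and c(1,2) = O (all other cells empty) and X to move is in WinningFor X; that is, if the second player answers X's opening central placement by placing adjacent to the center, then X can force a win. -/

import Mathlib

/-- The two players of Picaria. -/
inductive Player : Type
  | X : Player
  | O : Player
deriving DecidableEq

instance : Fintype Player where
  elems := {Player.X, Player.O}
  complete := by intro x; cases x <;> simp

/-- The opponent of a player. -/
def Player.other : Player → Player
  | Player.X => Player.O
  | Player.O => Player.X

/-- A cell of the 3×3 board, written (row, column), 0-indexed. -/
abbrev Cell : Type := Fin 3 × Fin 3

/-- A configuration assigns to each cell an optional stone. -/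
abbrev Config : Type := Cell → Option Player

/-- King-move adjacency on the board: distinct cells whose coordinates
differ by at most 1 each. -/
def adjacent (a b : Cell) : Prop :=
  a ≠ b ∧ |((a.1 : ℕ) : ℤ) - ((b.1 : ℕ) : ℤ)| ≤ 1 ∧
    |((a.2 : ℕ) : ℤ) - ((b.2 : ℕ) : ℤ)| ≤ 1

/-- The 8 lines of the board: 3 rows, 3 columns, 2 main diagonals. -/
def lines : List (Cell × Cell × Cell) :=
  [((0,0),(0,1),(0,2)), ((1,0),(1,1),(1,2)), ((2,0),(2,1),(2,2)),
   ((0,0),(1,0),(2,0)), ((0,1),(1,1),(2,1)), ((0,2),(1,2),(2,2)),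
   ((0,0),(1,1),(2,2)), ((0,2),(1,1),(2,0))]

/-- Player `p` has three-in-a-row in configuration `c`. -/
def threeInARow (c : Config) (p : Player) : Prop :=
  ∃ l ∈ lines, c l.1 = some p ∧ c l.2.1 = some p ∧ c l.2.2 = some p

/-- The number of stones of player `p` on the board. -/
def stoneCount (c : Config) (p : Player) : ℕ :=
  (Finset.univ.filter fun x : Cell => c x = some p).card

/-- Legal moves of player `t` from configuration `c`, producing `c'`:
placement on an empty cell while `t` has fewer than 3 stones on the board;
otherwise a slide of one of `t`'s stones to an adjacent empty cell. -/
def Move (t : Player) (c c' : Config) : Prop :=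
  (stoneCount c t < 3 ∧ ∃ x : Cell, c x = none ∧ c' = Function.update c x (some t)) ∨
  (3 ≤ stoneCount c t ∧ ∃ x y : Cell, c x = some t ∧ c y = none ∧ adjacent x y ∧
    c' = Function.update (Function.update c x none) y (some t))

/-- `WinningFor p` is the least set of states (configuration, player to move) such that:
(i) `(c, p)` is winning for `p` if some legal move of `p` immediately makes a
three-in-a-row for `p`, or leads to a state winning for `p`;
(ii) `(c, q)` (for `q` the opponent of `p`) is winning for `p` if `q` has at least one
legal move, and every legal move of `q` yields a configuration with no three-in-a-row
for `q` together with a state winning for `p`. -/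
inductive WinningFor (p : Player) : Config × Player → Prop
  | moveWin (c c' : Config) (h : Move p c c') (hw : threeInARow c' p) :
      WinningFor p (c, p)
  | moveStep (c c' : Config) (h : Move p c c') (hw : WinningFor p (c', p.other)) :
      WinningFor p (c, p)
  | forced (c : Config) (hne : ∃ c', Move p.other c c')
      (hnowin : ∀ c', Move p.other c c' → ¬ threeInARow c' p.other)
      (hall : ∀ c', Move p.other c c' → WinningFor p (c', p)) :
      WinningFor p (c, p.other)
/-- X in the center, O adjacent to the center. -/
def c1 : Config := fun x =>
  if x = ((1 : Fin 3), (1 : Fin 3)) then some Player.X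
  else if x = ((1 : Fin 3), (2 : Fin 3)) then some Player.O
  else none

instance instDecAdj : ∀ a b : Cell, Decidable (adjacent a b) := fun a b => by
  unfold adjacent; infer_instance
def cellsList : List Cell :=
  [(0,0),(0,1),(0,2),(1,0),(1,1),(1,2),(2,0),(2,1),(2,2)]
theorem mem_cellsList : ∀ x : Cell, x ∈ cellsList := by decide
def movesList (t : Player) (c : Config) : List Config :=
  if stoneCount c t < 3 then
    (cellsList.filter fun x => c x == none).map fun x => Function.update c x (some t)
  else
    cellsList.flatMap fun x =>
      if c x = some t then
        (cellsList.filter fun y => (c y == none) && decide (adjacent x y)).map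
          fun y => Function.update (Function.update c x none) y (some t)
      else []
theorem mem_movesList {t : Player} {c c' : Config} :
    c' ∈ movesList t c ↔ Move t c c' := by
  unfold movesList Move
  by_cases h : stoneCount c t < 3
  · simp only [h, if_true, List.mem_map, List.mem_filter, mem_cellsList, true_and,
      beq_iff_eq]
    constructor
    · rintro ⟨x, hx, rfl⟩
      exact Or.inl ⟨x, hx, rfl⟩
    · rintro (⟨x, hx, rfl⟩ | ⟨h3, -⟩)
      · exact ⟨x, hx, rfl⟩
      · omega
  · simp only [h, if_false, List.mem_flatMap, mem_cellsList, true_and]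
    constructor
    · rintro ⟨x, hx⟩
      by_cases hcx : c x = some t
      · simp only [hcx, if_true, List.mem_map, List.mem_filter, mem_cellsList, true_and,
          Bool.and_eq_true, beq_iff_eq, decide_eq_true_eq] at hx
        obtain ⟨y, ⟨hy, hadj⟩, rfl⟩ := hx
        exact Or.inr ⟨Nat.le_of_not_lt h, x, y, hcx, hy, hadj, rfl⟩
      · simp [hcx] at hx
    · rintro (⟨h3, -⟩ | ⟨-, x, y, hcx, hy, hadj, rfl⟩)
      · exact h3.elim
      · refine ⟨x, ?_⟩
        simp only [hcx, if_true, List.mem_map, List.mem_filter, mem_cellsList, true_and,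
          Bool.and_eq_true, beq_iff_eq, decide_eq_true_eq]
        exact ⟨y, ⟨hy, hadj⟩, rfl⟩

instance instDecTiar : ∀ (c : Config) (p : Player), Decidable (threeInARow c p) :=
  fun c p => by unfold threeInARow; infer_instance

def winF : ℕ → Config → Player → Bool
  | 0, _, _ => false
  | n+1, c, Player.X => (movesList Player.X c).any fun c' =>
      decide (threeInARow c' Player.X) || winF n c' Player.O
  | n+1, c, Player.O => (!(movesList Player.O c).isEmpty) &&
      ((movesList Player.O c).all fun c' =>
        !decide (threeInARow c' Player.O) && winF n c' Player.X)

theorem winF_sound : ∀ (n : ℕ) (c : Config) (t : Player),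
    winF n c t = true → WinningFor Player.X (c, t) := by
  intro n
  induction n with
  | zero => intro c t h; simp [winF] at h
  | succ n ih =>
    intro c t h
    cases t with
    | X =>
      simp only [winF, List.any_eq_true, Bool.or_eq_true, decide_eq_true_eq] at h
      obtain ⟨c', hm, hw⟩ := h
      rw [mem_movesList] at hm
      rcases hw with hw | hw
      · exact WinningFor.moveWin c c' hm hw
      · exact WinningFor.moveStep c c' hm (ih c' Player.O hw)
    | O =>
      simp only [winF, Bool.and_eq_true, Bool.not_eq_true',
        List.isEmpty_eq_false_iff_exists_mem, List.all_eq_true,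
        decide_eq_false_iff_not] at h
      obtain ⟨⟨c₀, hc₀⟩, hall⟩ := h
      refine WinningFor.forced (p := Player.X) c ⟨c₀, mem_movesList.mp hc₀⟩ ?_ ?_
      · intro c' hm
        exact (hall c' (mem_movesList.mpr hm)).1
      · intro c' hm
        exact ih c' Player.X (hall c' (mem_movesList.mpr hm)).2


/-- If the second player answers X's opening central placement by placing adjacent to
the center, then X can force a win. -/
theorem picaria_X_wins_after_adjacent_answer : WinningFor Player.X (c1, Player.X) :=
  winF_sound 7 c1 Player.X (by
    set_option maxRecDepth 100000 in
    set_option maxHeartbeats 4000000 in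
    decide)
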